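/- Let Π be a group with normal subgroup Π̃ of finite index, quotient Γ, section γ with γ(1)=1; G a group with center Z; ψ: Γ → Aut(G). For a (Γ,ψ)-invariant pair (ρ̃, h_*) whose representation ρ̃ has centralizer exactly Z in G, the family k_{σ,τ} := h_{στ}⁻¹ · ψ(σ)(h_τ) · h_σ · ρ̃(γ(σ)γ(τ)γ(στ)⁻¹) takes values in Z and defines a 2-cocycle of Γ with coefficients in Z (with Γ acting on Z via ψ). -/
import Mathlib


/-- The `2`-cochain `k (σ,τ) = h (στ)⁻¹ * ψ σ (h τ) * h σ * ρ̃ (γ σ * γ τ * γ (στ)⁻¹)`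
attached to a cochain `h` and a representation `ρ̃` of `Π̃ = ker π`. -/
def kcoc {P G Γ : Type*} [Group P] [Group G] [Group Γ]
    (π : P →* Γ) (γ : Γ → P) (hγ : ∀ σ, π (γ σ) = σ)
    (ψ : Γ →* MulAut G) (ρt : π.ker →* G) (h : Γ → G) (σ τ : Γ) : G :=
  (h (σ * τ))⁻¹ * ψ σ (h τ) * h σ *
    ρt ⟨γ σ * γ τ * (γ (σ * τ))⁻¹, by
      rw [MonoidHom.mem_ker]
      simp only [map_mul, map_inv, hγ]
      group⟩

private theorem conj_mem {P Γ : Type*} [Group P] [Group Γ] (π : P →* Γ)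
    (x : P) (a : π.ker) : x⁻¹ * ↑a * x ∈ π.ker := by
  rw [MonoidHom.mem_ker]
  simp [MonoidHom.mem_ker.mp a.2]

private theorem conj_mem' {P Γ : Type*} [Group P] [Group Γ] (π : P →* Γ)
    (x : P) (a : π.ker) : x * ↑a * x⁻¹ ∈ π.ker := by
  simpa using conj_mem π x⁻¹ a

private def cc {P Γ : Type*} [Group P] [Group Γ] (π : P →* Γ) (γ : Γ → P)
    (hγ : ∀ σ, π (γ σ) = σ) (σ τ : Γ) : π.ker :=
  ⟨γ σ * γ τ * (γ (σ * τ))⁻¹, by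
    rw [MonoidHom.mem_ker]
    simp only [map_mul, map_inv, hγ]
    group⟩

private theorem aux_center {P G Γ : Type*} [Group P] [Group G] [Group Γ]
    (π : P →* Γ) (γ : Γ → P) (hγ : ∀ σ, π (γ σ) = σ)
    (ψ : Γ →* MulAut G) (ρt : π.ker →* G) (h : Γ → G)
    (hconj : ∀ (σ : Γ) (a b : π.ker), (b : P) = (γ σ)⁻¹ * ↑a * γ σ →
      ψ σ (ρt b) = h σ * ρt a * (h σ)⁻¹)
    (hZ : ∀ g : G, (∀ α : π.ker, g * ρt α = ρt α * g) ↔ g ∈ Subgroup.center G)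
    (σ τ : Γ) : kcoc π γ hγ ψ ρt h σ τ ∈ Subgroup.center G := by
  refine (hZ _).mp fun α => ?_
  set c : π.ker := cc π γ hγ σ τ with hc
  have hK : kcoc π γ hγ ψ ρt h σ τ = (h (σ*τ))⁻¹ * ψ σ (h τ) * h σ * ρt c := rfl
  set b1 : π.ker := ⟨(γ σ)⁻¹ * ↑(c * α * c⁻¹) * γ σ, conj_mem π _ _⟩ with hb1
  set b2 : π.ker := ⟨(γ τ)⁻¹ * ↑b1 * γ τ, conj_mem π _ _⟩ with hb2
  have s1 : SemiconjBy (ρt c) (ρt α) (ρt (c * α * c⁻¹)) := by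
    show ρt c * ρt α = ρt (c * α * c⁻¹) * ρt c
    rw [← map_mul, ← map_mul]
    congr 1
    group
  have s2 : SemiconjBy (h σ) (ρt (c * α * c⁻¹)) (ψ σ (ρt b1)) := by
    show h σ * ρt (c * α * c⁻¹) = ψ σ (ρt b1) * h σ
    rw [hconj σ (c * α * c⁻¹) b1 rfl]
    group
  have s3 : SemiconjBy (ψ σ (h τ)) (ψ σ (ρt b1)) (ψ σ (ψ τ (ρt b2))) := by
    show ψ σ (h τ) * ψ σ (ρt b1) = ψ σ (ψ τ (ρt b2)) * ψ σ (h τ)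
    rw [← map_mul, ← map_mul]
    congr 1
    rw [hconj τ b1 b2 rfl]
    group
  have s4 : SemiconjBy ((h (σ*τ))⁻¹) (ψ σ (ψ τ (ρt b2))) (ρt α) := by
    show (h (σ*τ))⁻¹ * ψ σ (ψ τ (ρt b2)) = ρt α * (h (σ*τ))⁻¹
    have e1 : ψ σ (ψ τ (ρt b2)) = ψ (σ*τ) (ρt b2) := by
      rw [map_mul]; rfl
    have e2 : ψ (σ*τ) (ρt b2) = h (σ*τ) * ρt α * (h (σ*τ))⁻¹ := by
      refine hconj (σ*τ) α b2 ?_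
      show (γ τ)⁻¹ * ((γ σ)⁻¹ * ((γ σ * γ τ * (γ (σ*τ))⁻¹) * ↑α *
        (γ σ * γ τ * (γ (σ*τ))⁻¹)⁻¹) * γ σ) * γ τ = (γ (σ*τ))⁻¹ * ↑α * γ (σ*τ)
      group
    rw [e1, e2]
    group
  have total := ((s4.mul_left s3).mul_left s2).mul_left s1
  rw [hK]
  exact total.eq

private theorem aux_star {P G Γ : Type*} [Group P] [Group G] [Group Γ]
    (π : P →* Γ) (γ : Γ → P) (hγ : ∀ σ, π (γ σ) = σ)
    (ψ : Γ →* MulAut G) (ρt : π.ker →* G) (h : Γ → G)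
    (hconj : ∀ (σ : Γ) (a b : π.ker), (b : P) = (γ σ)⁻¹ * ↑a * γ σ →
      ψ σ (ρt b) = h σ * ρt a * (h σ)⁻¹)
    (hcen : ∀ (σ τ : Γ) (g : G),
      g * kcoc π γ hγ ψ ρt h σ τ = kcoc π γ hγ ψ ρt h σ τ * g)
    (σ τ : Γ) (a b ab : π.ker)
    (hab : (ab : P) = ↑a * γ σ * ↑b * (γ σ)⁻¹ * ↑(cc π γ hγ σ τ)) :
    ρt a * (h σ)⁻¹ * ψ σ (ρt b * (h τ)⁻¹)
      = (kcoc π γ hγ ψ ρt h σ τ)⁻¹ * (ρt ab * (h (σ*τ))⁻¹) := by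
  set K : G := kcoc π γ hγ ψ ρt h σ τ with hKdef
  have hK : K = (h (σ*τ))⁻¹ * ψ σ (h τ) * h σ * ρt (cc π γ hγ σ τ) := rfl
  set b' : π.ker := ⟨γ σ * ↑b * (γ σ)⁻¹, conj_mem' π _ _⟩ with hb'
  have e : ψ σ (ρt b) = h σ * ρt b' * (h σ)⁻¹ := by
    refine hconj σ b' b ?_
    show (b : P) = (γ σ)⁻¹ * (γ σ * ↑b * (γ σ)⁻¹) * γ σ
    group
  have hKg : ∀ g : G, g * K = K * g := hcen σ τ
  have hKg' : ∀ g : G, g * K⁻¹ = K⁻¹ * g := by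
    intro g
    calc g * K⁻¹ = K⁻¹ * (K * g) * K⁻¹ := by group
      _ = K⁻¹ * (g * K) * K⁻¹ := by rw [← hKg]
      _ = K⁻¹ * g := by group
  have E3 : (h (σ*τ))⁻¹ * (ψ σ (h τ) * h σ * ρt (cc π γ hγ σ τ))
      = (ψ σ (h τ) * h σ * ρt (cc π γ hγ σ τ)) * (h (σ*τ))⁻¹ := by
    have h1 : ψ σ (h τ) * h σ * ρt (cc π γ hγ σ τ) = h (σ*τ) * K := by
      rw [hK]; group
    rw [h1, mul_assoc, ← hKg ((h (σ*τ))⁻¹)]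
    group
  have hstep : (h σ)⁻¹ * (ψ σ (h τ))⁻¹
      = ρt (cc π γ hγ σ τ) * (h (σ*τ))⁻¹ * K⁻¹ := by
    have h2 : (h σ)⁻¹ * (ψ σ (h τ))⁻¹ * K = ρt (cc π γ hγ σ τ) * (h (σ*τ))⁻¹ := by
      calc (h σ)⁻¹ * (ψ σ (h τ))⁻¹ * K
          = (h σ)⁻¹ * (ψ σ (h τ))⁻¹ *
            ((h (σ*τ))⁻¹ * (ψ σ (h τ) * h σ * ρt (cc π γ hγ σ τ))) := by
            rw [hK]; group
        _ = (h σ)⁻¹ * (ψ σ (h τ))⁻¹ *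
            ((ψ σ (h τ) * h σ * ρt (cc π γ hγ σ τ)) * (h (σ*τ))⁻¹) := by rw [E3]
        _ = ρt (cc π γ hγ σ τ) * (h (σ*τ))⁻¹ := by group
    calc (h σ)⁻¹ * (ψ σ (h τ))⁻¹ = (h σ)⁻¹ * (ψ σ (h τ))⁻¹ * K * K⁻¹ := by group
      _ = ρt (cc π γ hγ σ τ) * (h (σ*τ))⁻¹ * K⁻¹ := by rw [h2]
  have hab' : ρt ab = ρt a * (ρt b' * ρt (cc π γ hγ σ τ)) := by
    rw [← map_mul, ← map_mul]
    congr 1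
    refine Subtype.ext ?_
    show (ab : P) = ↑a * (γ σ * ↑b * (γ σ)⁻¹ * ↑(cc π γ hγ σ τ))
    rw [hab]; group
  calc ρt a * (h σ)⁻¹ * ψ σ (ρt b * (h τ)⁻¹)
      = ρt a * (h σ)⁻¹ * (ψ σ (ρt b) * (ψ σ (h τ))⁻¹) := by rw [map_mul, map_inv]
    _ = ρt a * (h σ)⁻¹ * (h σ * ρt b' * (h σ)⁻¹ * (ψ σ (h τ))⁻¹) := by rw [e]
    _ = ρt a * ρt b' * ((h σ)⁻¹ * (ψ σ (h τ))⁻¹) := by group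
    _ = ρt a * ρt b' * (ρt (cc π γ hγ σ τ) * (h (σ*τ))⁻¹ * K⁻¹) := by rw [hstep]
    _ = (ρt a * (ρt b' * ρt (cc π γ hγ σ τ)) * (h (σ*τ))⁻¹) * K⁻¹ := by group
    _ = ρt ab * (h (σ*τ))⁻¹ * K⁻¹ := by rw [← hab']
    _ = K⁻¹ * (ρt ab * (h (σ*τ))⁻¹) := hKg' _


/-- for a `(Γ,ψ)`-invariant pair `(ρ̃, h)` whose representation has
centralizer exactly the centre `Z` of `G`, the family `k (σ,τ)` takes values in `Z`
and is a `2`-cocycle of `Γ` with coefficients in `Z` (for the `ψ`-action). -/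
theorem stmt7 {P G Γ : Type*} [Group P] [Group G] [Group Γ] [Finite Γ]
    (ψ : Γ →* MulAut G) (π : P →* Γ) (hπ : Function.Surjective π)
    (γ : Γ → P) (hγ : ∀ σ, π (γ σ) = σ) (hγ1 : γ 1 = 1)
    (ρt : π.ker →* G) (h : Γ → G)
    (hinv : ∀ (σ : Γ) (α : π.ker),
      ψ σ (ρt ⟨(γ σ)⁻¹ * (α : P) * γ σ, by
          have hk : π (α : P) = 1 := MonoidHom.mem_ker.mp α.2
          rw [MonoidHom.mem_ker]
          simp [map_mul, map_inv, hγ, hk]⟩)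
        = h σ * ρt α * (h σ)⁻¹)
    (hZ : ∀ g : G, (∀ α : π.ker, g * ρt α = ρt α * g) ↔ g ∈ Subgroup.center G) :
    (∀ σ τ : Γ, kcoc π γ hγ ψ ρt h σ τ ∈ Subgroup.center G) ∧
    (∀ σ τ μ : Γ,
      ψ σ (kcoc π γ hγ ψ ρt h τ μ) * (kcoc π γ hγ ψ ρt h (σ * τ) μ)⁻¹ *
        kcoc π γ hγ ψ ρt h σ (τ * μ) * (kcoc π γ hγ ψ ρt h σ τ)⁻¹ = 1) := by
  have hconj : ∀ (σ : Γ) (a b : π.ker), (b : P) = (γ σ)⁻¹ * ↑a * γ σ →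
      ψ σ (ρt b) = h σ * ρt a * (h σ)⁻¹ := by
    intro σ a b hb
    have hb' : b = ⟨(γ σ)⁻¹ * ↑a * γ σ, conj_mem π _ _⟩ := Subtype.ext hb
    rw [hb']
    exact hinv σ a
  have part1 : ∀ σ τ : Γ, kcoc π γ hγ ψ ρt h σ τ ∈ Subgroup.center G :=
    aux_center π γ hγ ψ ρt h hconj hZ
  have hcen : ∀ (σ τ : Γ) (g : G),
      g * kcoc π γ hγ ψ ρt h σ τ = kcoc π γ hγ ψ ρt h σ τ * g := fun σ τ =>
    Subgroup.mem_center_iff.mp (part1 σ τ)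
  -- ψ of a central element commutes with everything
  have hcenψ : ∀ (s σ τ : Γ) (g : G),
      g * ψ s (kcoc π γ hγ ψ ρt h σ τ) = ψ s (kcoc π γ hγ ψ ρt h σ τ) * g := by
    intro s σ τ g
    have h2 := congrArg (ψ s) (hcen σ τ ((ψ s).symm g))
    simpa [map_mul] using h2
  refine ⟨part1, fun σ τ μ => ?_⟩
  set K1 : G := kcoc π γ hγ ψ ρt h σ τ with hK1
  set K2 : G := kcoc π γ hγ ψ ρt h (σ*τ) μ with hK2
  set K3 : G := kcoc π γ hγ ψ ρt h τ μ with hK3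
  set K4 : G := kcoc π γ hγ ψ ρt h σ (τ*μ) with hK4
  -- the big kernel element
  have memd3 : γ σ * γ τ * γ μ * (γ (σ*τ*μ))⁻¹ ∈ π.ker := by
    rw [MonoidHom.mem_ker]
    simp only [map_mul, map_inv, hγ]
    group
  set d3 : π.ker := ⟨γ σ * γ τ * γ μ * (γ (σ*τ*μ))⁻¹, memd3⟩ with hd3
  have E1 := aux_star π γ hγ ψ ρt h hconj hcen σ τ 1 1 (cc π γ hγ σ τ) (by
    show (↑(cc π γ hγ σ τ) : P) = 1 * γ σ * 1 * (γ σ)⁻¹ * ↑(cc π γ hγ σ τ)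
    group)
  have E2 := aux_star π γ hγ ψ ρt h hconj hcen (σ*τ) μ (cc π γ hγ σ τ) 1 d3 (by
    show γ σ * γ τ * γ μ * (γ (σ*τ*μ))⁻¹
      = (γ σ * γ τ * (γ (σ*τ))⁻¹) * γ (σ*τ) * 1 * (γ (σ*τ))⁻¹ *
        (γ (σ*τ) * γ μ * (γ (σ*τ*μ))⁻¹)
    group)
  have E3 := aux_star π γ hγ ψ ρt h hconj hcen τ μ 1 1 (cc π γ hγ τ μ) (by
    show (↑(cc π γ hγ τ μ) : P) = 1 * γ τ * 1 * (γ τ)⁻¹ * ↑(cc π γ hγ τ μ)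
    group)
  have E4 := aux_star π γ hγ ψ ρt h hconj hcen σ (τ*μ) 1 (cc π γ hγ τ μ) d3 (by
    show γ σ * γ τ * γ μ * (γ (σ*τ*μ))⁻¹
      = 1 * γ σ * (γ τ * γ μ * (γ (τ*μ))⁻¹) * (γ σ)⁻¹ *
        (γ σ * γ (τ*μ) * (γ (σ*(τ*μ)))⁻¹)
    rw [mul_assoc σ τ μ]
    group)
  rw [← mul_assoc σ τ μ] at E4
  set W : G := ρt d3 * (h (σ*τ*μ))⁻¹ with hW
  have lhs1 : (ρt (1 : π.ker) * (h σ)⁻¹ * ψ σ (ρt (1 : π.ker) * (h τ)⁻¹)) *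
      ψ (σ*τ) (ρt (1 : π.ker) * (h μ)⁻¹) = K1⁻¹ * (K2⁻¹ * W) := by
    rw [E1, mul_assoc, E2]
  have lhs2 : (ρt (1 : π.ker) * (h σ)⁻¹ * ψ σ (ρt (1 : π.ker) * (h τ)⁻¹)) *
      ψ (σ*τ) (ρt (1 : π.ker) * (h μ)⁻¹) = (ψ σ K3)⁻¹ * (K4⁻¹ * W) := by
    have hsplit : (ρt (1 : π.ker) * (h σ)⁻¹ * ψ σ (ρt (1 : π.ker) * (h τ)⁻¹)) *
        ψ (σ*τ) (ρt (1 : π.ker) * (h μ)⁻¹)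
        = ρt (1 : π.ker) * (h σ)⁻¹ *
          ψ σ (ρt (1 : π.ker) * (h τ)⁻¹ * ψ τ (ρt (1 : π.ker) * (h μ)⁻¹)) := by
      rw [map_mul ψ σ τ, MulAut.mul_apply, mul_assoc, ← map_mul]
    rw [hsplit, E3, map_mul, map_inv]
    calc ρt (1 : π.ker) * (h σ)⁻¹ *
        ((ψ σ K3)⁻¹ * ψ σ (ρt (cc π γ hγ τ μ) * (h (τ*μ))⁻¹))
        = (ψ σ K3)⁻¹ * (ρt (1 : π.ker) * (h σ)⁻¹ *
            ψ σ (ρt (cc π γ hγ τ μ) * (h (τ*μ))⁻¹)) := by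
          rw [show ρt (1 : π.ker) * (h σ)⁻¹ * ((ψ σ K3)⁻¹ *
              ψ σ (ρt (cc π γ hγ τ μ) * (h (τ*μ))⁻¹))
            = (ρt (1 : π.ker) * (h σ)⁻¹ * (ψ σ K3)⁻¹) *
              ψ σ (ρt (cc π γ hγ τ μ) * (h (τ*μ))⁻¹) from by group]
          have hcomm : ρt (1 : π.ker) * (h σ)⁻¹ * (ψ σ K3)⁻¹
              = (ψ σ K3)⁻¹ * (ρt (1 : π.ker) * (h σ)⁻¹) := by
            have h5 := hcenψ σ τ μ (ρt (1 : π.ker) * (h σ)⁻¹)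
            rw [← hK3] at h5
            calc ρt (1 : π.ker) * (h σ)⁻¹ * (ψ σ K3)⁻¹
                = (ψ σ K3)⁻¹ * (ψ σ K3 * (ρt (1 : π.ker) * (h σ)⁻¹)) * (ψ σ K3)⁻¹ := by
                  group
              _ = (ψ σ K3)⁻¹ * (ρt (1 : π.ker) * (h σ)⁻¹ * ψ σ K3) * (ψ σ K3)⁻¹ := by
                  rw [← h5]
              _ = (ψ σ K3)⁻¹ * (ρt (1 : π.ker) * (h σ)⁻¹) := by group
          rw [hcomm, mul_assoc]
      _ = (ψ σ K3)⁻¹ * (K4⁻¹ * W) := by rw [E4]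
  have hfin : K1⁻¹ * K2⁻¹ = (ψ σ K3)⁻¹ * K4⁻¹ := by
    have h0 : (K1⁻¹ * K2⁻¹) * W = ((ψ σ K3)⁻¹ * K4⁻¹) * W := by
      rw [mul_assoc, mul_assoc]
      exact lhs1.symm.trans lhs2
    exact mul_right_cancel h0
  have hi : K2 * K1 = K4 * ψ σ K3 := by
    have := congrArg (·⁻¹) hfin
    simpa [mul_inv_rev] using this
  have hK4' : K4 = K2 * K1 * (ψ σ K3)⁻¹ := by
    rw [hi]; group
  have ca : K1 * ψ σ K3 = ψ σ K3 * K1 := hcenψ σ τ μ K1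
  calc ψ σ K3 * K2⁻¹ * K4 * K1⁻¹
      = ψ σ K3 * K2⁻¹ * (K2 * K1 * (ψ σ K3)⁻¹) * K1⁻¹ := by rw [← hK4']
    _ = ψ σ K3 * K1 * (ψ σ K3)⁻¹ * K1⁻¹ := by group
    _ = 1 := by rw [← ca]; group
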